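/- Refinement of frame popping from infinite to finite memory: if σ1^inf ≳ σ1^fin and popf σ1^inf ∋ ok(σ2^inf, tt), then there exists σ2^fin such that σ2^inf ≳ σ2^fin and popf σ1^fin ∋ ok(σ2^fin, tt). -/

import Mathlib

/-! Two-phase memory model: refinement of byte reads from infinite to finite memory. -/

/-- Pointers: an address tagged with a provenance (`Option ℕ`, `none` is the wildcard). -/
structure MPtr (Addr : Type) where
  a : Addr
  pr : Option ℕ

/-- Memory configurations. -/
structure Conf (Addr SByte : Type) where
  mem : Addr → Option (SByte × Option ℕ)
  heap : Addr → Option (Set (MPtr Addr))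
  stack : List (Set (MPtr Addr))
  used : Set (Option ℕ)

/-- Possible outcomes of a memory operation. -/
inductive ErrUbOom (A : Type) where
  | UB
  | OOM
  | FAIL
  | ok (a : A)

/-- The specification monad. -/
abbrev MemPropT (Addr SByte X : Type) : Type :=
  Conf Addr SByte → Set (ErrUbOom (Conf Addr SByte × X))

/-- `σ.mem[p] ≐ b`: address `p.a` maps to byte `b` with provenance `p.pr`. -/
def readByteAt {Addr SByte : Type} (σ : Conf Addr SByte) (p : MPtr Addr) (b : SByte) : Prop :=
  σ.mem p.a = some (b, p.pr)

/-- A pointer is accessible in memory. -/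
def accessible {Addr SByte : Type} (σ : Conf Addr SByte) (p : MPtr Addr) : Prop :=
  ∃ b, readByteAt σ p b


/-- `σ1 ≡ σ2 \\ ps`: the two memories agree on content and provenance at
all addresses except those of the pointers in `ps`. -/
def memEqExcept {Addr SByte : Type} (σ1 σ2 : Conf Addr SByte) (ps : Set (MPtr Addr)) : Prop :=
  ∀ (p' : MPtr Addr) (b : SByte),
    (∀ p ∈ ps, p'.a ≠ p.a) → (readByteAt σ1 p' b ↔ readByteAt σ2 p' b)

/-- Specification of popping the top stack frame: the top frame `ps` is popped,
all its pointers must be accessible; their addresses are unmapped from memory and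
nothing else changes (`UB` in the complementary cases; `OOM` is always allowed). -/
def popfSpec {Addr SByte : Type} : MemPropT Addr SByte Unit :=
  fun σ1 =>
    { beh | beh = .OOM
          ∨ ((σ1.stack = [] ∨
              ∃ f rest, σ1.stack = f :: rest ∧ ∃ q ∈ f, ¬ accessible σ1 q) ∧ beh = .UB)
          ∨ ∃ (σ2 : Conf Addr SByte) (ps : Set (MPtr Addr)),
              σ2.heap = σ1.heap ∧ σ2.used = σ1.used ∧
              σ1.stack = ps :: σ2.stack ∧
              (∀ q ∈ ps, accessible σ1 q ∧ σ2.mem q.a = none) ∧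
              memEqExcept σ1 σ2 ps ∧
              beh = .ok (σ2, ()) }
/-- Canonical injection of finite (64-bit) addresses into the infinite address type ℤ. -/
def liftAddr (a : UInt64) : ℤ := (a.toNat : ℤ)

/-- Lifting of pointers. -/
def liftPtr (p : MPtr UInt64) : MPtr ℤ := ⟨liftAddr p.a, p.pr⟩

/-- Pointwise lifting of a finite memory configuration to an infinite one,
given a lifting `liftB` of symbolic bytes. -/
def liftConf {SBf SBi : Type} (liftB : SBf → SBi) (σ : Conf UInt64 SBf) : Conf ℤ SBi where
  mem := fun z =>
    if 0 ≤ z ∧ z < 2 ^ 64 then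
      (σ.mem (UInt64.ofNat z.toNat)).map (fun bp => (liftB bp.1, bp.2))
    else none
  heap := fun z =>
    if 0 ≤ z ∧ z < 2 ^ 64 then
      (σ.heap (UInt64.ofNat z.toNat)).map (fun S => liftPtr '' S)
    else none
  stack := σ.stack.map (fun f => liftPtr '' f)
  used := σ.used


lemma ofNat_toNat' (a : UInt64) : UInt64.ofNat a.toNat = a := by
  apply UInt64.ext
  show a.toNat % 2 ^ 64 = a.toNat
  exact Nat.mod_eq_of_lt a.toNat_lt

lemma liftAddr_range (a : UInt64) : 0 ≤ liftAddr a ∧ liftAddr a < 2 ^ 64 := by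
  have h := a.toNat_lt
  constructor
  · exact Int.ofNat_nonneg _
  · show (a.toNat : ℤ) < 2 ^ 64
    omega

lemma ofNat_liftAddr (a : UInt64) : UInt64.ofNat (liftAddr a).toNat = a := by
  have : (liftAddr a).toNat = a.toNat := Int.toNat_natCast _
  rw [this, ofNat_toNat']

lemma liftAddr_ofNat (z : ℤ) (h0 : 0 ≤ z) (h1 : z < 2 ^ 64) :
    liftAddr (UInt64.ofNat z.toNat) = z := by
  have hz : z.toNat < 2 ^ 64 := by omega
  show ((UInt64.ofNat z.toNat).toNat : ℤ) = z
  have : (UInt64.ofNat z.toNat).toNat = z.toNat % 2 ^ 64 := rfl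
  rw [this, Nat.mod_eq_of_lt hz]
  omega

lemma liftConf_mem_inrange {SBf SBi : Type} (liftB : SBf → SBi) (σ : Conf UInt64 SBf)
    (z : ℤ) (h : 0 ≤ z ∧ z < 2 ^ 64) :
    (liftConf liftB σ).mem z
      = (σ.mem (UInt64.ofNat z.toNat)).map (fun bp => (liftB bp.1, bp.2)) := if_pos h

lemma liftConf_mem_outrange {SBf SBi : Type} (liftB : SBf → SBi) (σ : Conf UInt64 SBf)
    (z : ℤ) (h : ¬ (0 ≤ z ∧ z < 2 ^ 64)) :
    (liftConf liftB σ).mem z = none := if_neg h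

lemma liftConf_mem_liftAddr {SBf SBi : Type} (liftB : SBf → SBi) (σ : Conf UInt64 SBf)
    (a : UInt64) :
    (liftConf liftB σ).mem (liftAddr a) = (σ.mem a).map (fun bp => (liftB bp.1, bp.2)) := by
  rw [liftConf_mem_inrange liftB σ _ (liftAddr_range a), ofNat_liftAddr]

/-- Refinement of frame popping from infinite to finite memory: if `σ1^inf ≳ σ1^fin`
and `popf σ1^inf ∋ ok (σ2^inf, tt)`, then there exists `σ2^fin` such that
`σ2^inf ≳ σ2^fin` and `popf σ1^fin ∋ ok (σ2^fin, tt)`. -/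
theorem popf_spec_refinement {SBf SBi : Type}
    (liftB : SBf → SBi) (hinj : Function.Injective liftB)
    (σ1inf σ2inf : Conf ℤ SBi) (σ1fin : Conf UInt64 SBf)
    (hσ : σ1inf = liftConf liftB σ1fin)
    (hpop : ErrUbOom.ok (σ2inf, ()) ∈ popfSpec σ1inf) :
    ∃ σ2fin : Conf UInt64 SBf,
      σ2inf = liftConf liftB σ2fin ∧
      ErrUbOom.ok (σ2fin, ()) ∈ popfSpec σ1fin := by
  classical
  rcases hpop with h | ⟨_, h⟩ | ⟨σ2, ps, hheap, hused, hstack, hacc, heq, hbeh⟩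
  · exact absurd h (by simp)
  · exact absurd h (by simp)
  · -- identify σ2 with σ2inf
    have hσ2 : σ2 = σ2inf := by cases hbeh; rfl
    subst hσ2
    subst hσ
    -- analyze the finite stack
    have hstack' : (σ1fin.stack.map (fun f => liftPtr '' f)) = ps :: σ2.stack := hstack
    obtain ⟨f, rest, hfr, hf, hrest⟩ :
        ∃ f rest, σ1fin.stack = f :: rest ∧ liftPtr '' f = ps ∧
          rest.map (fun f => liftPtr '' f) = σ2.stack := by
      cases hsf : σ1fin.stack with
      | nil => rw [hsf] at hstack'; simp at hstack'
      | cons f rest =>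
        rw [hsf] at hstack'
        simp only [List.map_cons, List.cons.injEq] at hstack'
        exact ⟨f, rest, rfl, hstack'.1, hstack'.2⟩
    subst hf
    -- the candidate finite popped configuration
    set σ2fin : Conf UInt64 SBf :=
      { mem := fun a => if ∃ q ∈ f, q.a = a then none else σ1fin.mem a
        heap := σ1fin.heap
        stack := rest
        used := σ1fin.used } with hdef
    have hσ2finmem : ∀ a : UInt64,
        σ2fin.mem a = if ∃ q ∈ f, q.a = a then none else σ1fin.mem a := fun _ => rfl
    refine ⟨σ2fin, ?_, ?_⟩
    · -- σ2 equals the lifting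
      obtain ⟨m2, h2, s2, u2⟩ := σ2
      have hre : liftConf liftB σ2fin = ⟨(liftConf liftB σ2fin).mem,
          (liftConf liftB σ2fin).heap, (liftConf liftB σ2fin).stack,
          (liftConf liftB σ2fin).used⟩ := rfl
      rw [hre]
      simp only [Conf.mk.injEq]
      refine ⟨?_, ?_, ?_, ?_⟩
      · -- memories
        funext z
        show m2 z = (liftConf liftB σ2fin).mem z
        by_cases hz : 0 ≤ z ∧ z < 2 ^ 64
        · rw [liftConf_mem_inrange liftB σ2fin z hz]
          set a := UInt64.ofNat z.toNat with ha
          have hza : liftAddr a = z := liftAddr_ofNat z hz.1 hz.2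
          by_cases hq : ∃ q ∈ f, q.a = a
          · -- address is in the popped frame: both none
            obtain ⟨q, hqf, hqa⟩ := hq
            have hmem2 : m2 ((liftPtr q).a) = none :=
              (hacc (liftPtr q) ⟨q, hqf, rfl⟩).2
            have hptr : (liftPtr q).a = z := by
              show liftAddr q.a = z
              rw [hqa, hza]
            rw [hptr] at hmem2
            rw [hmem2, hσ2finmem a, if_pos ⟨q, hqf, hqa⟩]
            rfl
          · -- outside the frame: memories agree
            have hcond : ∀ p ∈ liftPtr '' f, z ≠ p.a := by
              rintro p ⟨q, hqf, rfl⟩ hzz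
              apply hq
              refine ⟨q, hqf, ?_⟩
              have hz' : z = liftAddr q.a := hzz
              rw [ha, hz', ofNat_liftAddr]
            have key : ∀ (b : SBi) (pr : Option ℕ),
                (liftConf liftB σ1fin).mem z = some (b, pr) ↔ m2 z = some (b, pr) := by
              intro b pr
              exact heq ⟨z, pr⟩ b (fun p hp => hcond p hp)
            have hm2 : m2 z = (liftConf liftB σ1fin).mem z := by
              cases h1 : (liftConf liftB σ1fin).mem z with
              | none =>
                cases h2' : m2 z with
                | none => rfl
                | some bp =>
                  obtain ⟨b, pr⟩ := bp
                  have := (key b pr).mpr h2'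
                  rw [h1] at this; exact absurd this (by simp)
              | some bp =>
                obtain ⟨b, pr⟩ := bp
                exact (key b pr).mp h1
            rw [hm2, liftConf_mem_inrange liftB σ1fin z hz, ← ha, hσ2finmem a, if_neg hq]
        · -- out of range: both none
          rw [liftConf_mem_outrange liftB σ2fin z hz]
          have h1 : (liftConf liftB σ1fin).mem z = none :=
            liftConf_mem_outrange liftB σ1fin z hz
          have hcond : ∀ p ∈ liftPtr '' f, z ≠ p.a := by
            rintro p ⟨q, hqf, rfl⟩ hzz
            have hr := liftAddr_range q.a
            have hz' : z = liftAddr q.a := hzz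
            exact hz ⟨hz' ▸ hr.1, hz' ▸ hr.2⟩
          cases h2' : m2 z with
          | none => rfl
          | some bp =>
            obtain ⟨b, pr⟩ := bp
            have h3 : (liftConf liftB σ1fin).mem z = some (b, pr) :=
              (heq ⟨z, pr⟩ b (fun p hp => hcond p hp)).mpr h2'
            rw [h1] at h3; exact absurd h3 (by simp)
      · -- heaps
        exact hheap
      · -- stacks
        exact hrest.symm
      · -- used
        exact hused
    · -- popfSpec membership for the finite model
      right; right
      refine ⟨σ2fin, f, rfl, rfl, ?_, ?_, ?_, rfl⟩
      · exact hfr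
      · intro q hq
        constructor
        · -- accessible
          obtain ⟨b, hb⟩ := (hacc (liftPtr q) ⟨q, hq, rfl⟩).1
          have hb' : (liftConf liftB σ1fin).mem (liftAddr q.a) = some (b, q.pr) := hb
          rw [liftConf_mem_liftAddr] at hb'
          obtain ⟨⟨bf, pr⟩, hbf, hpair⟩ := Option.map_eq_some_iff.mp hb'
          simp only [Prod.mk.injEq] at hpair
          refine ⟨bf, ?_⟩
          show σ1fin.mem q.a = some (bf, q.pr)
          rw [hbf, hpair.2]
        · -- unmapped
          rw [hσ2finmem q.a, if_pos ⟨q, hq, rfl⟩]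
      · -- memEqExcept
        intro p' b hcond
        have hno : ¬ ∃ q ∈ f, q.a = p'.a := by
          rintro ⟨q, hqf, hqa⟩
          exact hcond q hqf hqa.symm
        show σ1fin.mem p'.a = some (b, p'.pr) ↔ σ2fin.mem p'.a = some (b, p'.pr)
        rw [hσ2finmem p'.a, if_neg hno]
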